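/- Let α ∈ (0,1] and let v be a real number. Define f : (0,∞) → ℝ by f(t) = (1 − (1 − e^{−t})^α)^v (the inner generator of a nested Joe copula). Then for every integer n ≥ 1 and every t > 0, f^{(n)}(t) = f(t) · (−1)^n · ∑_{m=1}^{n} S(n,m) · ( −e^{−t}/(1 − e^{−t}) )^m · ∑_{k=1}^{m} v^k · ∑_{l=k}^{m} s(l,k) · s_{ml}(α) · ( −(1 − e^{−t})^α / (1 − (1 − e^{−t})^α) )^l. -/

import Mathlib

noncomputable section

/-- Stirling numbers of the first kind `s(n,k)` (signed), real-valued,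
defined by the recurrence `s(n+1,k) = s(n,k-1) - n·s(n,k)`. -/
def st1 : ℕ → ℕ → ℝ
  | 0, 0 => 1
  | 0, _ + 1 => 0
  | _ + 1, 0 => 0
  | n + 1, k + 1 => st1 n k - (n : ℝ) * st1 n (k + 1)

/-- Stirling numbers of the second kind `S(n,k)`, real-valued,
defined by the recurrence `S(n+1,k) = S(n,k-1) + k·S(n,k)`. -/
def st2 : ℕ → ℕ → ℝ
  | 0, 0 => 1
  | 0, _ + 1 => 0
  | _ + 1, 0 => 0
  | n + 1, k + 1 => st2 n k + ((k : ℝ) + 1) * st2 n (k + 1)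

/-- `snk n k x = ∑_{l=k}^n s(n,l) S(l,k) x^l`. -/
def snk (n k : ℕ) (x : ℝ) : ℝ := ∑ l ∈ Finset.Icc k n, st1 n l * st2 l k * x ^ l

/-- Falling factorial `(x)_n = x (x-1) ⋯ (x-n+1)`, with `(x)_0 = 1`. -/
def ff (x : ℝ) (n : ℕ) : ℝ := ∏ i ∈ Finset.range n, (x - (i : ℝ))

/-- The index set `P_{n,k}`: tuples `(j_1, …, j_{n-k+1})`, 0-indexed by `Fin (n-k+1)`
(entry `i` representing `j_{i+1}`), with `∑ i·j_i = n` and `∑ j_i = k`. -/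
def PIdx (n k : ℕ) : Finset (Fin (n - k + 1) → ℕ) :=
  (Fintype.piFinset fun _ => Finset.range (n + 1)).filter fun j =>
    (∑ i, (i.1 + 1) * j i) = n ∧ (∑ i, j i) = k

/-- The partial Bell polynomial `B_{n,k}(x_1,…,x_{n-k+1})`, the `l`-th argument being `x l`. -/
def bellP (n k : ℕ) (x : ℕ → ℝ) : ℝ :=
  ∑ j ∈ PIdx n k,
    ((n.factorial : ℝ) / ∏ i, ((j i).factorial : ℝ)) *
      ∏ i, (x (i.1 + 1) / ((i.1 + 1).factorial : ℝ)) ^ j i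

/-- The index set `Q^{d₀}_{d,k} = { j : ∑ j_s = k, 1 ≤ j_s ≤ d_s }`. -/
def QIdx (d0 : ℕ) (dv : Fin d0 → ℕ) (k : ℕ) : Finset (Fin d0 → ℕ) :=
  (Fintype.piFinset fun s => Finset.Icc 1 (dv s)).filter fun j => (∑ s, j s) = k

/-- Complete monotonicity of `h` on `(0,∞)`: `h` is infinitely differentiable there and
`(-1)^k h^{(k)}(t) ≥ 0` for all `k ∈ ℕ₀` and `t ∈ (0,∞)`. -/
def CMOn (h : ℝ → ℝ) : Prop :=
  ContDiffOn ℝ (⊤ : ℕ∞) h (Set.Ioi 0) ∧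
    ∀ k : ℕ, ∀ t ∈ Set.Ioi (0 : ℝ), 0 ≤ (-1 : ℝ) ^ k * iteratedDerivWithin k h (Set.Ioi 0) t

/-- Partial derivative of `F : ℝ^ι → ℝ` in the coordinate `i`. -/
def pdrv {ι : Type*} [DecidableEq ι] (i : ι) (F : (ι → ℝ) → ℝ) : (ι → ℝ) → ℝ :=
  fun x => deriv (fun y => F (Function.update x i y)) (x i)


/-! ### Auxiliary combinatorial lemmas -/

lemma st1_succ' (n k : ℕ) : st1 (n+1) (k+1) = st1 n k - (n : ℝ) * st1 n (k+1) := rfl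
lemma st2_succ' (n k : ℕ) : st2 (n+1) (k+1) = st2 n k + ((k : ℝ) + 1) * st2 n (k+1) := rfl
lemma st1_zero_right (n : ℕ) : st1 (n+1) 0 = 0 := rfl
lemma st2_zero_right (n : ℕ) : st2 (n+1) 0 = 0 := rfl

lemma st1_eq_zero_of_lt : ∀ {n k : ℕ}, n < k → st1 n k = 0 := by
  intro n
  induction n with
  | zero => intro k hk; obtain ⟨k, rfl⟩ := Nat.exists_eq_add_of_lt hk; rfl
  | succ n ih =>
    intro k hk
    obtain ⟨k, rfl⟩ : ∃ m, k = m + 1 := ⟨k - 1, by omega⟩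
    rw [st1_succ', ih (by omega), ih (by omega)]; ring

lemma st2_eq_zero_of_lt : ∀ {n k : ℕ}, n < k → st2 n k = 0 := by
  intro n
  induction n with
  | zero => intro k hk; obtain ⟨k, rfl⟩ := Nat.exists_eq_add_of_lt hk; rfl
  | succ n ih =>
    intro k hk
    obtain ⟨k, rfl⟩ : ∃ m, k = m + 1 := ⟨k - 1, by omega⟩
    rw [st2_succ', ih (by omega), ih (by omega)]; ring

lemma snk_eq_zero_of_lt {m l : ℕ} (h : m < l) (x : ℝ) : snk m l x = 0 := by
  unfold snk; rw [Finset.Icc_eq_empty (by omega)]; simp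

lemma snk_zero_right {m : ℕ} (hm : 1 ≤ m) (x : ℝ) : snk m 0 x = 0 := by
  unfold snk
  rw [Finset.sum_eq_zero]
  intro l hl
  rcases Nat.eq_zero_or_pos l with rfl | hl1
  · obtain ⟨m, rfl⟩ : ∃ m', m = m' + 1 := ⟨m - 1, by omega⟩
    simp [st1_zero_right]
  · obtain ⟨l, rfl⟩ : ∃ l', l = l' + 1 := ⟨l - 1, by omega⟩
    simp [st2_zero_right]

lemma sum_Icc_succ_shift (a b : ℕ) (f : ℕ → ℝ) :
    ∑ j ∈ Finset.Icc (a+1) (b+1), f j = ∑ j ∈ Finset.Icc a b, f (j+1) := by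
  rw [← Finset.Ico_add_one_right_eq_Icc, ← Finset.Ico_add_one_right_eq_Icc, Finset.sum_Ico_eq_sum_range,
    Finset.sum_Ico_eq_sum_range]
  rw [show b + 1 + 1 - (a + 1) = b + 1 - a by omega]
  exact Finset.sum_congr rfl fun i _ => by rw [show a + 1 + i = a + i + 1 by omega]

lemma snk_rec (m l : ℕ) (x : ℝ) :
    snk (m+1) (l+1) x = x * snk m l x + (((l:ℝ)+1) * x - (m:ℝ)) * snk m (l+1) x := by
  unfold snk
  have h1 : ∀ j ∈ Finset.Icc (l+1) (m+1), st1 (m+1) j * st2 j (l+1) * x ^ j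
      = st1 m (j-1) * st2 j (l+1) * x ^ j - (m:ℝ) * (st1 m j * st2 j (l+1) * x ^ j) := by
    intro j hj
    simp only [Finset.mem_Icc] at hj
    obtain ⟨j, rfl⟩ : ∃ j', j = j' + 1 := ⟨j - 1, by omega⟩
    rw [st1_succ']; simp only [Nat.add_sub_cancel]; push_cast; ring
  rw [Finset.sum_congr rfl h1, Finset.sum_sub_distrib, ← Finset.mul_sum]
  rw [sum_Icc_succ_shift l m (fun j => st1 m (j-1) * st2 j (l+1) * x ^ j)]
  simp only [Nat.add_sub_cancel]
  have h2 : ∀ j ∈ Finset.Icc l m, st1 m j * st2 (j+1) (l+1) * x ^ (j+1)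
      = x * (st1 m j * st2 j l * x ^ j) + ((l:ℝ)+1) * x * (st1 m j * st2 j (l+1) * x ^ j) := by
    intro j _
    rw [st2_succ']; ring
  rw [Finset.sum_congr rfl h2, Finset.sum_add_distrib, ← Finset.mul_sum, ← Finset.mul_sum]
  have h3 : ∑ j ∈ Finset.Icc l m, st1 m j * st2 j (l+1) * x ^ j
      = ∑ j ∈ Finset.Icc (l+1) m, st1 m j * st2 j (l+1) * x ^ j := by
    refine (Finset.sum_subset (Finset.Icc_subset_Icc (Nat.le_succ l) le_rfl) ?_).symm
    intro j hj hj2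
    simp only [Finset.mem_Icc] at hj hj2
    have : j = l := by omega
    subst this
    rw [st2_eq_zero_of_lt (by omega)]; ring
  have h4 : ∑ j ∈ Finset.Icc (l+1) (m+1), st1 m j * st2 j (l+1) * x ^ j
      = ∑ j ∈ Finset.Icc (l+1) m, st1 m j * st2 j (l+1) * x ^ j := by
    refine (Finset.sum_subset (Finset.Icc_subset_Icc le_rfl (Nat.le_succ m)) ?_).symm
    intro j hj hj2
    simp only [Finset.mem_Icc] at hj hj2
    have : j = m + 1 := by omega
    subst this
    rw [st1_eq_zero_of_lt (by omega)]; ring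
  rw [h3, h4]; ring

/-! ### Rectangular-range sums -/

def Pr (x v b : ℝ) (N m : ℕ) : ℝ :=
  ∑ k ∈ Finset.range N, v^k * ∑ l ∈ Finset.range N, st1 l k * snk m l x * b^l

def Dr (x v b : ℝ) (N m : ℕ) : ℝ :=
  ∑ k ∈ Finset.range N, v^k *
    ∑ l ∈ Finset.range N, st1 l k * snk m l x * ((l:ℝ) * (b^(l+1) - b^l))

lemma key (x v b : ℝ) {N m : ℕ} (hm : 1 ≤ m) (hN : m + 2 ≤ N) :
    Pr x v b N (m+1) =
      v * x * b * Pr x v b N m - (m:ℝ) * Pr x v b N m - x * Dr x v b N m := by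
  obtain ⟨N, rfl⟩ : ∃ N', N = N' + 1 := ⟨N - 1, by omega⟩
  have hmN : m < N := by omega
  set inP : ℕ → ℝ := fun k => ∑ l ∈ Finset.range (N+1), st1 l k * snk m l x * b^l with hinP
  have step1 : ∀ k, ∑ l ∈ Finset.range (N+1), st1 l k * snk (m+1) l x * b^l
      = x * (∑ l ∈ Finset.range N, st1 (l+1) k * snk m l x * b^(l+1))
        + x * (∑ l ∈ Finset.range N, ((l:ℝ)+1) * (st1 (l+1) k * snk m (l+1) x * b^(l+1)))
        - (m:ℝ) * inP k := by
    intro k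
    rw [Finset.sum_range_succ' (fun l => st1 l k * snk (m+1) l x * b^l) N]
    rw [snk_zero_right (by omega) x]
    have e1 : ∀ l ∈ Finset.range N, st1 (l+1) k * snk (m+1) (l+1) x * b^(l+1)
        = x * (st1 (l+1) k * snk m l x * b^(l+1))
          + x * (((l:ℝ)+1) * (st1 (l+1) k * snk m (l+1) x * b^(l+1)))
          - (m:ℝ) * (st1 (l+1) k * snk m (l+1) x * b^(l+1)) := by
      intro l _; rw [snk_rec]; ring
    rw [Finset.sum_congr rfl e1]
    have e2 : inP k = ∑ l ∈ Finset.range N, st1 (l+1) k * snk m (l+1) x * b^(l+1) := by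
      show (∑ l ∈ Finset.range (N+1), st1 l k * snk m l x * b^l) = _
      rw [Finset.sum_range_succ' (fun l => st1 l k * snk m l x * b^l) N]
      rw [snk_zero_right hm x]; simp
    rw [e2]
    rw [Finset.sum_sub_distrib, Finset.sum_add_distrib, ← Finset.mul_sum, ← Finset.mul_sum,
      ← Finset.mul_sum]
    ring
  have lhs_eq : Pr x v b (N+1) (m+1)
      = x * (∑ k ∈ Finset.range (N+1), v^k *
          (∑ l ∈ Finset.range N, st1 (l+1) k * snk m l x * b^(l+1)))
        + x * (∑ k ∈ Finset.range (N+1), v^k *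
          (∑ l ∈ Finset.range N, ((l:ℝ)+1) * (st1 (l+1) k * snk m (l+1) x * b^(l+1))))
        - (m:ℝ) * Pr x v b (N+1) m := by
    unfold Pr
    rw [Finset.sum_congr rfl (fun k _ => by rw [step1 k])]
    have : ∀ k ∈ Finset.range (N+1), v ^ k *
        (x * (∑ l ∈ Finset.range N, st1 (l+1) k * snk m l x * b^(l+1))
        + x * (∑ l ∈ Finset.range N, ((l:ℝ)+1) * (st1 (l+1) k * snk m (l+1) x * b^(l+1)))
        - (m:ℝ) * inP k)
        = x * (v^k * (∑ l ∈ Finset.range N, st1 (l+1) k * snk m l x * b^(l+1)))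
        + x * (v^k * (∑ l ∈ Finset.range N, ((l:ℝ)+1) * (st1 (l+1) k * snk m (l+1) x * b^(l+1))))
        - (m:ℝ) * (v^k * inP k) := by intro k _; ring
    rw [Finset.sum_congr rfl this, Finset.sum_sub_distrib, Finset.sum_add_distrib,
      ← Finset.mul_sum, ← Finset.mul_sum, ← Finset.mul_sum]
  have T2_eq : ∑ k ∈ Finset.range (N+1), v^k *
        (∑ l ∈ Finset.range N, ((l:ℝ)+1) * (st1 (l+1) k * snk m (l+1) x * b^(l+1)))
      = ∑ k ∈ Finset.range (N+1), v^k *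
        (∑ l ∈ Finset.range (N+1), (l:ℝ) * (st1 l k * snk m l x * b^l)) := by
    refine Finset.sum_congr rfl fun k _ => ?_
    congr 1
    rw [Finset.sum_range_succ' (fun l => (l:ℝ) * (st1 l k * snk m l x * b^l)) N]
    simp
  have J0 : ∑ l ∈ Finset.range (N+1), (l:ℝ) * (st1 l 0 * snk m l x * b^(l+1)) = 0 := by
    rw [Finset.sum_range_succ' (fun l => (l:ℝ) * (st1 l 0 * snk m l x * b^(l+1))) N]
    rw [Finset.sum_eq_zero (fun l _ => by rw [st1_zero_right]; push_cast; ring)]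
    simp
  have T1_eq : ∑ k ∈ Finset.range (N+1), v^k *
        (∑ l ∈ Finset.range N, st1 (l+1) k * snk m l x * b^(l+1))
      = v * b * Pr x v b (N+1) m
        - ∑ k ∈ Finset.range (N+1), v^k *
            (∑ l ∈ Finset.range (N+1), (l:ℝ) * (st1 l k * snk m l x * b^(l+1))) := by
    rw [Finset.sum_range_succ' (fun k => v^k *
      (∑ l ∈ Finset.range N, st1 (l+1) k * snk m l x * b^(l+1))) N]
    rw [Finset.sum_range_succ' (fun k => v^k *
      (∑ l ∈ Finset.range (N+1), (l:ℝ) * (st1 l k * snk m l x * b^(l+1)))) N]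
    rw [J0]
    have inner0 : ∑ l ∈ Finset.range N, st1 (l+1) 0 * snk m l x * b^(l+1) = 0 :=
      Finset.sum_eq_zero fun l _ => by rw [st1_zero_right]; ring
    rw [inner0]
    have split : ∀ k ∈ Finset.range N,
        v^(k+1) * (∑ l ∈ Finset.range N, st1 (l+1) (k+1) * snk m l x * b^(l+1))
        = v^(k+1) * (∑ l ∈ Finset.range N, st1 l k * snk m l x * b^(l+1))
          - v^(k+1) * (∑ l ∈ Finset.range (N+1), (l:ℝ) * (st1 l (k+1) * snk m l x * b^(l+1))) := by
      intro k _
      have e : ∀ l ∈ Finset.range N, st1 (l+1) (k+1) * snk m l x * b^(l+1)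
          = st1 l k * snk m l x * b^(l+1) - (l:ℝ) * (st1 l (k+1) * snk m l x * b^(l+1)) := by
        intro l _; rw [st1_succ']; ring
      rw [Finset.sum_congr rfl e, Finset.sum_sub_distrib]
      have e2 : ∑ l ∈ Finset.range (N+1), (l:ℝ) * (st1 l (k+1) * snk m l x * b^(l+1))
          = ∑ l ∈ Finset.range N, (l:ℝ) * (st1 l (k+1) * snk m l x * b^(l+1)) := by
        rw [Finset.sum_range_succ, snk_eq_zero_of_lt (by omega) x]
        simp
      rw [e2]; ring
    rw [Finset.sum_congr rfl split, Finset.sum_sub_distrib]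
    have PrExp : Pr x v b (N+1) m
        = ∑ k ∈ Finset.range N, v^k * ∑ l ∈ Finset.range (N+1), st1 l k * snk m l x * b^l := by
      unfold Pr
      rw [Finset.sum_range_succ]
      have : ∑ l ∈ Finset.range (N+1), st1 l N * snk m l x * b^l = 0 := by
        refine Finset.sum_eq_zero fun l hl => ?_
        simp only [Finset.mem_range] at hl
        rcases lt_or_ge l N with h | h
        · rw [st1_eq_zero_of_lt h]; ring
        · rw [snk_eq_zero_of_lt (by omega) x]; ring
      rw [this]; ring
    rw [PrExp]
    have inshift : ∀ k ∈ Finset.range N,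
        v^(k+1) * (∑ l ∈ Finset.range N, st1 l k * snk m l x * b^(l+1))
        = v * b * (v^k * ∑ l ∈ Finset.range (N+1), st1 l k * snk m l x * b^l) := by
      intro k _
      have : ∑ l ∈ Finset.range (N+1), st1 l k * snk m l x * b^l
          = ∑ l ∈ Finset.range N, st1 l k * snk m l x * b^l := by
        rw [Finset.sum_range_succ, snk_eq_zero_of_lt (by omega) x]; simp
      rw [this, Finset.mul_sum, Finset.mul_sum, Finset.mul_sum]
      refine Finset.sum_congr rfl fun l _ => ?_
      ring
    rw [Finset.sum_congr rfl inshift, ← Finset.mul_sum]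
    ring
  have Dr_eq : Dr x v b (N+1) m
      = ∑ k ∈ Finset.range (N+1), v^k *
          (∑ l ∈ Finset.range (N+1), (l:ℝ) * (st1 l k * snk m l x * b^(l+1)))
        - ∑ k ∈ Finset.range (N+1), v^k *
          (∑ l ∈ Finset.range (N+1), (l:ℝ) * (st1 l k * snk m l x * b^l)) := by
    unfold Dr
    rw [← Finset.sum_sub_distrib]
    refine Finset.sum_congr rfl fun k _ => ?_
    rw [← mul_sub, ← Finset.sum_sub_distrib]
    congr 1
    refine Finset.sum_congr rfl fun l _ => ?_
    ring
  rw [lhs_eq, T1_eq, T2_eq, Dr_eq]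
  ring

lemma PD_eq (x v : ℝ) (φ : ℕ → ℝ) {N m : ℕ} (hm : 1 ≤ m) (hN : m < N) :
    ∑ k ∈ Finset.Icc 1 m, v^k * ∑ l ∈ Finset.Icc k m, st1 l k * snk m l x * φ l
    = ∑ k ∈ Finset.range N, v^k * ∑ l ∈ Finset.range N, st1 l k * snk m l x * φ l := by
  have inner : ∀ k, 1 ≤ k → k ≤ m →
      ∑ l ∈ Finset.Icc k m, st1 l k * snk m l x * φ l
      = ∑ l ∈ Finset.range N, st1 l k * snk m l x * φ l := by
    intro k hk1 hk2
    refine Finset.sum_subset ?_ ?_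
    · intro l hl; simp only [Finset.mem_Icc] at hl; simp only [Finset.mem_range]; omega
    · intro l _ hl; simp only [Finset.mem_Icc, not_and, not_le] at hl
      rcases lt_or_ge l k with h | h
      · rw [st1_eq_zero_of_lt (by omega)]; ring
      · rw [snk_eq_zero_of_lt (hl h) x]; ring
  have step1 : ∑ k ∈ Finset.Icc 1 m, v^k * ∑ l ∈ Finset.Icc k m, st1 l k * snk m l x * φ l
      = ∑ k ∈ Finset.Icc 1 m, v^k * ∑ l ∈ Finset.range N, st1 l k * snk m l x * φ l := by
    refine Finset.sum_congr rfl fun k hk => ?_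
    simp only [Finset.mem_Icc] at hk
    rw [inner k hk.1 hk.2]
  rw [step1]
  refine Finset.sum_subset ?_ ?_
  · intro k hk; simp only [Finset.mem_Icc] at hk; simp only [Finset.mem_range]; omega
  · intro k _ hk
    simp only [Finset.mem_Icc, not_and, not_le] at hk
    rcases Nat.eq_zero_or_pos k with rfl | hk1
    · have : ∑ l ∈ Finset.range N, st1 l 0 * snk m l x * φ l = 0 := by
        refine Finset.sum_eq_zero fun l _ => ?_
        rcases Nat.eq_zero_or_pos l with rfl | hl1
        · rw [snk_zero_right hm x]; ring
        · obtain ⟨l, rfl⟩ : ∃ l', l = l' + 1 := ⟨l - 1, by omega⟩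
          rw [st1_zero_right]; ring
      rw [this]; ring
    · have hkm : m < k := hk hk1
      have : ∑ l ∈ Finset.range N, st1 l k * snk m l x * φ l = 0 := by
        refine Finset.sum_eq_zero fun l _ => ?_
        rcases lt_or_ge l k with h | h
        · rw [st1_eq_zero_of_lt h]; ring
        · rw [snk_eq_zero_of_lt (by omega) x]; ring
      rw [this]; ring

lemma sum_Icc_one_eq (M : ℕ) (f : ℕ → ℝ) :
    ∑ j ∈ Finset.Icc 1 M, f j = ∑ j ∈ Finset.range M, f (j+1) := by
  rw [← Finset.Ico_add_one_right_eq_Icc, Finset.sum_Ico_eq_sum_range,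
    show M + 1 - 1 = M from rfl]
  exact Finset.sum_congr rfl fun i _ => by rw [Nat.add_comm 1 i]

lemma main_alg (x v a b : ℝ) (n : ℕ) (hn : 1 ≤ n) :
    ∑ m ∈ Finset.Icc 1 (n+1), st2 (n+1) m * a^m * Pr x v b (n+3) m
    = v * x * a * b * (∑ m ∈ Finset.Icc 1 n, st2 n m * a^m * Pr x v b (n+3) m)
      - ∑ m ∈ Finset.Icc 1 n, (st2 n m * ((m:ℝ) * (a^(m+1) - a^m)) * Pr x v b (n+3) m
          + st2 n m * (x * a^(m+1)) * Dr x v b (n+3) m) := by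
  rw [sum_Icc_one_eq (n+1) (fun m => st2 (n+1) m * a^m * Pr x v b (n+3) m)]
  have exp1 : ∀ m ∈ Finset.range (n+1),
      st2 (n+1) (m+1) * a^(m+1) * Pr x v b (n+3) (m+1)
      = st2 n m * a^(m+1) * Pr x v b (n+3) (m+1)
        + ((m:ℝ)+1) * (st2 n (m+1) * a^(m+1) * Pr x v b (n+3) (m+1)) := by
    intro m _; rw [st2_succ']; ring
  rw [Finset.sum_congr rfl exp1, Finset.sum_add_distrib]
  have S1 : ∑ m ∈ Finset.range (n+1), st2 n m * a^(m+1) * Pr x v b (n+3) (m+1)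
      = ∑ m ∈ Finset.Icc 1 n, st2 n m * a^(m+1) * Pr x v b (n+3) (m+1) := by
    rw [sum_Icc_one_eq n (fun m => st2 n m * a^(m+1) * Pr x v b (n+3) (m+1))]
    rw [Finset.sum_range_succ' (fun m => st2 n m * a^(m+1) * Pr x v b (n+3) (m+1)) n]
    obtain ⟨n', rfl⟩ : ∃ n'', n = n'' + 1 := ⟨n - 1, by omega⟩
    rw [st2_zero_right]
    simp
  have S2 : ∑ m ∈ Finset.range (n+1), ((m:ℝ)+1) * (st2 n (m+1) * a^(m+1) * Pr x v b (n+3) (m+1))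
      = ∑ m ∈ Finset.Icc 1 n, (m:ℝ) * (st2 n m * a^m * Pr x v b (n+3) m) := by
    rw [sum_Icc_one_eq n (fun m => (m:ℝ) * (st2 n m * a^m * Pr x v b (n+3) m))]
    rw [Finset.sum_range_succ]
    rw [st2_eq_zero_of_lt (by omega)]
    simp
  rw [S1, S2]
  have S1' : ∀ m ∈ Finset.Icc 1 n,
      st2 n m * a^(m+1) * Pr x v b (n+3) (m+1)
      = st2 n m * a^(m+1) * (v * x * b * Pr x v b (n+3) m - (m:ℝ) * Pr x v b (n+3) m
          - x * Dr x v b (n+3) m) := by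
    intro m hm
    simp only [Finset.mem_Icc] at hm
    rw [key x v b hm.1 (by omega)]
  rw [Finset.sum_congr rfl S1']
  rw [Finset.mul_sum, ← Finset.sum_sub_distrib, ← Finset.sum_add_distrib]
  refine Finset.sum_congr rfl fun m hm => ?_
  simp only [Finset.mem_Icc] at hm
  rw [pow_succ a m]
  ring

lemma inner_deriv_eq (x v a b : ℝ) (N m : ℕ) :
    ∑ k ∈ Finset.range N, v^k *
      ∑ l ∈ Finset.range N, st1 l k * snk m l x * ((l:ℝ) * b^(l-1) * (x * a * (b^2 - b)))
    = x * a * Dr x v b N m := by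
  unfold Dr
  rw [Finset.mul_sum]
  refine Finset.sum_congr rfl fun k _ => ?_
  rw [Finset.mul_sum, Finset.mul_sum, Finset.mul_sum]
  refine Finset.sum_congr rfl fun l _ => ?_
  rcases Nat.eq_zero_or_pos l with rfl | hl
  · push_cast; ring
  · obtain ⟨l, rfl⟩ : ∃ l', l = l' + 1 := ⟨l - 1, by omega⟩
    simp only [Nat.add_sub_cancel]
    have e1 : b^(l+1+1) = b^l * b * b := by rw [pow_succ, pow_succ]
    have e2 : b^(l+1) = b^l * b := pow_succ b l
    rw [e1, e2]
    push_cast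
    ring

/-- The central algebraic identity equating the derivative expression with `gfun (n+1)`. -/
lemma deriv_value_eq (x v a b f : ℝ) (n : ℕ) (hn : 1 ≤ n) :
    f * (-1:ℝ)^(n+1) * ∑ m ∈ Finset.Icc 1 (n+1), st2 (n+1) m * a^m *
        (∑ k ∈ Finset.Icc 1 m, v^k * ∑ l ∈ Finset.Icc k m, st1 l k * snk m l x * b^l)
    = -(v * x * a * b * f) * (-1:ℝ)^n * (∑ m ∈ Finset.Icc 1 n, st2 n m * a^m *
        (∑ k ∈ Finset.Icc 1 m, v^k * ∑ l ∈ Finset.Icc k m, st1 l k * snk m l x * b^l))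
      + f * (-1:ℝ)^n * ∑ m ∈ Finset.Icc 1 n,
          (st2 n m * ((m:ℝ) * a^(m-1) * (a^2 - a)) *
            (∑ k ∈ Finset.Icc 1 m, v^k * ∑ l ∈ Finset.Icc k m, st1 l k * snk m l x * b^l)
          + st2 n m * a^m *
            (∑ k ∈ Finset.Icc 1 m, v^k * ∑ l ∈ Finset.Icc k m, st1 l k * snk m l x *
              ((l:ℝ) * b^(l-1) * (x * a * (b^2 - b))))) := by
  have e1 : ∀ m ∈ Finset.Icc 1 (n+1),
      st2 (n+1) m * a^m *
        (∑ k ∈ Finset.Icc 1 m, v^k * ∑ l ∈ Finset.Icc k m, st1 l k * snk m l x * b^l)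
      = st2 (n+1) m * a^m * Pr x v b (n+3) m := by
    intro m hm
    simp only [Finset.mem_Icc] at hm
    rw [PD_eq x v (fun l => b^l) (N := n+3) hm.1 (by omega)]
    rfl
  have e2 : ∀ m ∈ Finset.Icc 1 n,
      st2 n m * a^m *
        (∑ k ∈ Finset.Icc 1 m, v^k * ∑ l ∈ Finset.Icc k m, st1 l k * snk m l x * b^l)
      = st2 n m * a^m * Pr x v b (n+3) m := by
    intro m hm
    simp only [Finset.mem_Icc] at hm
    rw [PD_eq x v (fun l => b^l) (N := n+3) hm.1 (by omega)]
    rfl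
  have e3 : ∀ m ∈ Finset.Icc 1 n,
      st2 n m * ((m:ℝ) * a^(m-1) * (a^2 - a)) *
        (∑ k ∈ Finset.Icc 1 m, v^k * ∑ l ∈ Finset.Icc k m, st1 l k * snk m l x * b^l)
      + st2 n m * a^m *
        (∑ k ∈ Finset.Icc 1 m, v^k * ∑ l ∈ Finset.Icc k m, st1 l k * snk m l x *
          ((l:ℝ) * b^(l-1) * (x * a * (b^2 - b))))
      = st2 n m * ((m:ℝ) * (a^(m+1) - a^m)) * Pr x v b (n+3) m
        + st2 n m * (x * a^(m+1)) * Dr x v b (n+3) m := by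
    intro m hm
    simp only [Finset.mem_Icc] at hm
    rw [PD_eq x v (fun l => b^l) (N := n+3) hm.1 (by omega),
      PD_eq x v (fun l => (l:ℝ) * b^(l-1) * (x * a * (b^2 - b))) (N := n+3) hm.1 (by omega)]
    rw [inner_deriv_eq x v a b (n+3) m]
    rw [show (∑ k ∈ Finset.range (n+3), v ^ k *
        ∑ l ∈ Finset.range (n+3), st1 l k * snk m l x * b ^ l) = Pr x v b (n+3) m from rfl]
    obtain ⟨m, rfl⟩ : ∃ m', m = m' + 1 := ⟨m - 1, by omega⟩
    simp only [Nat.add_sub_cancel]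
    have e4 : a^(m+1+1) = a^m * a * a := by rw [pow_succ, pow_succ]
    have e5 : a^(m+1) = a^m * a := pow_succ a m
    rw [e4, e5]
    ring
  rw [Finset.sum_congr rfl e1, Finset.sum_congr rfl e2, Finset.sum_congr rfl e3]
  rw [main_alg x v a b n hn]
  rw [pow_succ]
  ring

/-! ### Analytic part -/

def Af (t : ℝ) : ℝ := -(Real.exp (-t)) / (1 - Real.exp (-t))
def Bf (α t : ℝ) : ℝ := -((1 - Real.exp (-t)) ^ α) / (1 - (1 - Real.exp (-t)) ^ α)
def Ff (α v t : ℝ) : ℝ := (1 - (1 - Real.exp (-t)) ^ α) ^ v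

section
variable {α v t : ℝ}

lemma hx1 (ht : 0 < t) : Real.exp (-t) < 1 := by
  rw [show (1:ℝ) = Real.exp 0 by simp]
  exact Real.exp_lt_exp.mpr (by linarith)

lemma hu0 (ht : 0 < t) : 0 < 1 - Real.exp (-t) := by linarith [hx1 ht]

lemma hy1 (hα : 0 < α) (ht : 0 < t) : (1 - Real.exp (-t)) ^ α < 1 :=
  Real.rpow_lt_one (le_of_lt (hu0 ht)) (by linarith [Real.exp_pos (-t)]) hα

lemma hw0 (hα : 0 < α) (ht : 0 < t) : 0 < 1 - (1 - Real.exp (-t)) ^ α := by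
  linarith [hy1 hα ht]

lemma hasDerivAt_exp_neg (t : ℝ) :
    HasDerivAt (fun s : ℝ => Real.exp (-s)) (-(Real.exp (-t))) t := by
  simpa [Function.comp_def] using (Real.hasDerivAt_exp (-t)).comp t (hasDerivAt_neg t)

lemma hasDerivAt_u (t : ℝ) :
    HasDerivAt (fun s : ℝ => 1 - Real.exp (-s)) (Real.exp (-t)) t := by
  simpa using (hasDerivAt_const t (1:ℝ)).fun_sub (hasDerivAt_exp_neg t)

lemma hasDerivAt_y (ht : 0 < t) :
    HasDerivAt (fun s : ℝ => (1 - Real.exp (-s)) ^ α)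
      (Real.exp (-t) * α * (1 - Real.exp (-t)) ^ (α - 1)) t :=
  (hasDerivAt_u t).rpow_const (Or.inl (ne_of_gt (hu0 ht)))

lemma hasDerivAt_w (ht : 0 < t) :
    HasDerivAt (fun s : ℝ => 1 - (1 - Real.exp (-s)) ^ α)
      (-(Real.exp (-t) * α * (1 - Real.exp (-t)) ^ (α - 1))) t := by
  simpa using (hasDerivAt_const t (1:ℝ)).fun_sub (hasDerivAt_y ht)

lemma hasDerivAt_A (ht : 0 < t) : HasDerivAt Af (Af t ^ 2 - Af t) t := by
  have h := ((hasDerivAt_exp_neg t).fun_neg).fun_div (hasDerivAt_u t) (ne_of_gt (hu0 ht))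
  refine h.congr_deriv ?_
  unfold Af
  have h1 : (1 : ℝ) - Real.exp (-t) ≠ 0 := ne_of_gt (hu0 ht)
  field_simp
  ring

lemma hasDerivAt_B (hα : 0 < α) (ht : 0 < t) :
    HasDerivAt (Bf α) (α * Af t * ((Bf α t) ^ 2 - Bf α t)) t := by
  have h := ((hasDerivAt_y (α := α) ht).fun_neg).fun_div (hasDerivAt_w ht) (ne_of_gt (hw0 hα ht))
  refine h.congr_deriv ?_
  unfold Bf Af
  have h1 : (1 : ℝ) - Real.exp (-t) ≠ 0 := ne_of_gt (hu0 ht)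
  have h2 : (1 : ℝ) - (1 - Real.exp (-t)) ^ α ≠ 0 := ne_of_gt (hw0 hα ht)
  rw [Real.rpow_sub_one h1]
  field_simp
  ring

lemma hasDerivAt_F (hα : 0 < α) (ht : 0 < t) :
    HasDerivAt (Ff α v) (-(v * α * Af t * Bf α t * Ff α v t)) t := by
  have h := (hasDerivAt_w (α := α) ht).rpow_const (p := v) (Or.inl (ne_of_gt (hw0 hα ht)))
  refine h.congr_deriv ?_
  unfold Ff Bf Af
  have h1 : (1 : ℝ) - Real.exp (-t) ≠ 0 := ne_of_gt (hu0 ht)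
  have h2 : (1 : ℝ) - (1 - Real.exp (-t)) ^ α ≠ 0 := ne_of_gt (hw0 hα ht)
  rw [Real.rpow_sub_one h1, Real.rpow_sub_one h2]
  field_simp
  try ring
  try exact Or.inl trivial

end

/-- The claimed formula for the `n`-th derivative. -/
def gfun (α v : ℝ) (n : ℕ) (t : ℝ) : ℝ :=
  Ff α v t * (-1:ℝ)^n *
    ∑ m ∈ Finset.Icc 1 n, st2 n m * Af t ^ m *
      ∑ k ∈ Finset.Icc 1 m, v^k *
        ∑ l ∈ Finset.Icc k m, st1 l k * snk m l α * Bf α t ^ l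

lemma gfun_one (α v t : ℝ) : gfun α v 1 t = -(v * α * Af t * Bf α t * Ff α v t) := by
  unfold gfun
  rw [Finset.Icc_self, Finset.sum_singleton, Finset.Icc_self, Finset.sum_singleton,
    Finset.Icc_self, Finset.sum_singleton]
  have h1 : st2 1 1 = 1 := by
    rw [st2_succ' 0 0, show st2 0 0 = 1 from rfl, show st2 0 1 = 0 from rfl]; norm_num
  have h2 : st1 1 1 = 1 := by
    rw [st1_succ' 0 0, show st1 0 0 = 1 from rfl, show st1 0 1 = 0 from rfl]; norm_num
  have h3 : snk 1 1 α = α := by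
    unfold snk
    rw [Finset.Icc_self, Finset.sum_singleton, h1, h2]
    ring
  rw [h1, h2, h3]
  ring

lemma hasDerivAt_gfun (α v : ℝ) (hα : 0 < α) (n : ℕ) (hn : 1 ≤ n) (t : ℝ) (ht : 0 < t) :
    HasDerivAt (gfun α v n) (gfun α v (n+1) t) t := by
  have hA := hasDerivAt_A ht
  have hB := hasDerivAt_B hα ht
  have hF := hasDerivAt_F (v := v) hα ht
  have hInner : ∀ m : ℕ, HasDerivAt
      (fun s => ∑ k ∈ Finset.Icc 1 m, v^k *
        ∑ l ∈ Finset.Icc k m, st1 l k * snk m l α * Bf α s ^ l)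
      (∑ k ∈ Finset.Icc 1 m, v^k *
        ∑ l ∈ Finset.Icc k m, st1 l k * snk m l α *
          ((l:ℝ) * Bf α t ^ (l-1) * (α * Af t * (Bf α t ^ 2 - Bf α t)))) t := by
    intro m
    refine HasDerivAt.fun_sum fun k _ => HasDerivAt.const_mul _ ?_
    exact HasDerivAt.fun_sum fun l _ => HasDerivAt.const_mul _ (hB.fun_pow l)
  have hSum := HasDerivAt.fun_sum
    (fun m (_ : m ∈ Finset.Icc 1 n) => ((hA.fun_pow m).const_mul (st2 n m)).fun_mul (hInner m))
  have hG := (hF.mul_const ((-1:ℝ)^n)).fun_mul hSum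
  have hfun : HasDerivAt (gfun α v n)
      (-(v * α * Af t * Bf α t * Ff α v t) * (-1:ℝ)^n *
        (∑ m ∈ Finset.Icc 1 n, st2 n m * Af t ^ m *
          ∑ k ∈ Finset.Icc 1 m, v^k *
            ∑ l ∈ Finset.Icc k m, st1 l k * snk m l α * Bf α t ^ l)
      + Ff α v t * (-1:ℝ)^n *
        ∑ m ∈ Finset.Icc 1 n,
          (st2 n m * ((m:ℝ) * Af t ^ (m-1) * (Af t ^ 2 - Af t)) *
            (∑ k ∈ Finset.Icc 1 m, v^k *
              ∑ l ∈ Finset.Icc k m, st1 l k * snk m l α * Bf α t ^ l)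
          + st2 n m * Af t ^ m *
            (∑ k ∈ Finset.Icc 1 m, v^k *
              ∑ l ∈ Finset.Icc k m, st1 l k * snk m l α *
                ((l:ℝ) * Bf α t ^ (l-1) * (α * Af t * (Bf α t ^ 2 - Bf α t)))))) t := by
    exact hG
  have hval := deriv_value_eq α v (Af t) (Bf α t) (Ff α v t) n hn
  rw [show gfun α v (n+1) t = Ff α v t * (-1:ℝ)^(n+1) *
      ∑ m ∈ Finset.Icc 1 (n+1), st2 (n+1) m * Af t ^ m *
        ∑ k ∈ Finset.Icc 1 m, v^k *
          ∑ l ∈ Finset.Icc k m, st1 l k * snk m l α * Bf α t ^ l from rfl]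
  rw [hval]
  exact hfun


lemma stmt19_main (α : ℝ) (hα0 : 0 < α) (v : ℝ) :
    ∀ N : ℕ, 1 ≤ N → ∀ s : ℝ, 0 < s →
      iteratedDerivWithin N (fun u => (1 - (1 - Real.exp (-u)) ^ α) ^ v) (Set.Ioi 0) s
        = gfun α v N s := by
  intro N
  induction N with
  | zero => intro h; exact absurd h (by omega)
  | succ N ih =>
    intro _ s hs
    rcases Nat.eq_zero_or_pos N with rfl | hN
    · rw [iteratedDerivWithin_one]
      rw [derivWithin_of_isOpen isOpen_Ioi hs]
      rw [gfun_one]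
      exact (hasDerivAt_F hα0 hs).deriv
    · rw [iteratedDerivWithin_succ]
      rw [derivWithin_of_isOpen isOpen_Ioi hs]
      have hev : iteratedDerivWithin N (fun u => (1 - (1 - Real.exp (-u)) ^ α) ^ v)
          (Set.Ioi 0) =ᶠ[nhds s] gfun α v N :=
        Filter.eventuallyEq_of_mem (isOpen_Ioi.mem_nhds hs) (fun r hr => ih hN r hr)
      rw [hev.deriv_eq]
      exact (hasDerivAt_gfun α v hα0 N hN s hs).deriv

/-- for the inner generator `f(t) = (1 - (1 - e^{-t})^α)^v` of a nested
Joe copula,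
`f^{(n)}(t) = f(t) (-1)^n ∑_{m=1}^n S(n,m) (-e^{-t}/(1-e^{-t}))^m ∑_{k=1}^m v^k
  ∑_{l=k}^m s(l,k) s_{ml}(α) (-(1-e^{-t})^α/(1-(1-e^{-t})^α))^l`. -/
theorem stmt19 (α : ℝ) (hα : α ∈ Set.Ioc (0 : ℝ) 1) (v : ℝ) (n : ℕ) (hn : 1 ≤ n)
    (t : ℝ) (ht : 0 < t) :
    iteratedDerivWithin n (fun u => (1 - (1 - Real.exp (-u)) ^ α) ^ v) (Set.Ioi 0) t =
      (1 - (1 - Real.exp (-t)) ^ α) ^ v * (-1 : ℝ) ^ n *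
        ∑ m ∈ Finset.Icc 1 n,
          st2 n m * (-(Real.exp (-t)) / (1 - Real.exp (-t))) ^ m *
            ∑ k ∈ Finset.Icc 1 m, v ^ k *
              ∑ l ∈ Finset.Icc k m,
                st1 l k * snk m l α *
                  (-((1 - Real.exp (-t)) ^ α) / (1 - (1 - Real.exp (-t)) ^ α)) ^ l := by

  rw [stmt19_main α hα.1 v n hn t ht]
  rfl
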